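/- arXiv:1705.01888 — 4 statements merged into one kernel-verified Lean document; each statement's English description precedes it below -/
import Mathlib

section
/- Let X be a finite set and let P be a set of partial functions from the power set P(X) to P(X). Assume that for each p ∈ P there is a permutation σ_p of X such that p(a) = σ_p[a] (the image of the set a under σ_p) for each a in dom(p). Then there exists a map φ: P → Sym(X) such that (i) p(a) = φ(p)[a] for all a ∈ dom(p), and (ii) φ is coherent: whenever (p₁, p₂, q) ∈ P³ satisfies dom(p₂) = dom(q), range(p₁) = range(q), range(p₂) = dom(p₁), and q = p₁ ∘ p₂, then φ(q) = φ(p₁) ∘ φ(p₂). -/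
/-- A partial function on a type `α`: a domain together with a map
(values outside the domain are irrelevant). -/
structure PartFun (α : Type*) where
  dom : Set α
  toFun : α → α

/-- The range of a partial function. -/
def PartFun.ran {α : Type*} (p : PartFun α) : Set α := p.toFun '' p.dom

/-- A triple `(p₁, p₂, q)` of partial functions is coherent if `dom(p₂) = dom(q)`,
`range(p₁) = range(q)`, `range(p₂) = dom(p₁)` and `q = p₁ ∘ p₂` on `dom(q)`. -/
def PartFun.CoherentTriple {α : Type*} (p₁ p₂ q : PartFun α) : Prop :=
  p₂.dom = q.dom ∧ p₁.ran = q.ran ∧ p₂.ran = p₁.dom ∧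
    ∀ a ∈ q.dom, q.toFun a = p₁.toFun (p₂.toFun a)

/-!
The atom of a point `x` for a family `F` of sets consists of the points lying in exactly the same
members of `F` as `x`. A permutation `σ` inducing `p` maps the atom of `x` for `dom p` onto the atom
of `σ x` for `ran p`; this target atom does not depend on `σ`, and conversely every permutation
sending each point into its target atom induces `p`. After fixing a linear order on `X`, `φ(p)`
sends the `k`-th smallest point of each atom of `dom p` to the `k`-th smallest point of its target
atom. For a coherent triple `(p₁, p₂, q)` the atoms of `ran p₂` are those of `dom p₁`, so
`φ(p₁) ∘ φ(p₂)` also preserves ranks from the atoms of `dom q` to their target atoms, and hence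
equals `φ(q)`.
-/

section RankMatch

variable {α : Type*} [LinearOrder α]

def rankMatch (C D : Finset α) (x : α) : α :=
  (D.sort (· ≤ ·)).getD ((C.sort (· ≤ ·)).idxOf x) x

theorem idxOf_sort_lt_card {C : Finset α} {x : α} (hx : x ∈ C) :
    (C.sort (· ≤ ·)).idxOf x < C.card := by
  rw [← Finset.length_sort (· ≤ ·)]
  exact List.idxOf_lt_length_iff.2 ((Finset.mem_sort _).2 hx)

theorem rankMatch_eq_getElem {C D : Finset α} {x : α} (hx : x ∈ C) (h : C.card ≤ D.card) :
    rankMatch C D x = (D.sort (· ≤ ·))[(C.sort (· ≤ ·)).idxOf x]'(by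
      rw [Finset.length_sort]; exact (idxOf_sort_lt_card hx).trans_le h) :=
  List.getD_eq_getElem _ _ _

theorem rankMatch_mem {C D : Finset α} {x : α} (hx : x ∈ C) (h : C.card ≤ D.card) :
    rankMatch C D x ∈ D := by
  rw [rankMatch_eq_getElem hx h]
  exact (Finset.mem_sort _).1 (List.getElem_mem _)

theorem idxOf_rankMatch {C D : Finset α} {x : α} (hx : x ∈ C) (h : C.card ≤ D.card) :
    (D.sort (· ≤ ·)).idxOf (rankMatch C D x) = (C.sort (· ≤ ·)).idxOf x := by
  rw [rankMatch_eq_getElem hx h]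
  exact (Finset.sort_nodup _ _).idxOf_getElem _ _

theorem rankMatch_injOn {C D : Finset α} (h : C.card ≤ D.card) :
    Set.InjOn (rankMatch C D) C := by
  intro x hx x' hx' hxx'
  have hidx := idxOf_rankMatch hx h
  rw [hxx', idxOf_rankMatch hx' h] at hidx
  exact ((List.idxOf_inj ((Finset.mem_sort _).2 hx')).1 hidx).symm

theorem rankMatch_rankMatch {C D E : Finset α} {x : α} (hx : x ∈ C) (hCD : C.card ≤ D.card)
    (hCE : C.card ≤ E.card) :
    rankMatch D E (rankMatch C D x) = rankMatch C E x := by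
  have hlt : (C.sort (· ≤ ·)).idxOf x < (E.sort (· ≤ ·)).length := by
    rw [Finset.length_sort]; exact (idxOf_sort_lt_card hx).trans_le hCE
  rw [rankMatch.eq_1 D E, idxOf_rankMatch hx hCD, rankMatch.eq_1 C E,
    List.getD_eq_getElem _ _ hlt, List.getD_eq_getElem _ _ hlt]

end RankMatch

section Induces

variable {X : Type*}

def Induces (p : PartFun (Set X)) (σ : Equiv.Perm X) : Prop :=
  ∀ a ∈ p.dom, p.toFun a = σ '' a

theorem Induces.apply_mem_iff {p : PartFun (Set X)} {σ : Equiv.Perm X} (hσ : Induces p σ)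
    {a : Set X} (ha : a ∈ p.dom) (x : X) : σ x ∈ p.toFun a ↔ x ∈ a := by
  rw [hσ a ha, σ.injective.mem_set_image]

theorem Induces.mul {p₁ p₂ q : PartFun (Set X)} {σ₁ σ₂ : Equiv.Perm X} (h₁ : Induces p₁ σ₁)
    (h₂ : Induces p₂ σ₂) (hc : PartFun.CoherentTriple p₁ p₂ q) : Induces q (σ₁ * σ₂) := by
  obtain ⟨hdom, -, hmid, hcomp⟩ := hc
  intro a ha
  have ha₂ : a ∈ p₂.dom := hdom ▸ ha
  have hp₂a : p₂.toFun a ∈ p₁.dom := hmid ▸ ⟨a, ha₂, rfl⟩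
  rw [hcomp a ha, h₁ _ hp₂a, h₂ a ha₂, ← Set.image_comp]
  rfl

variable [Fintype X]

open Classical in
noncomputable def atom (F : Set (Set X)) (x : X) : Finset X :=
  Finset.univ.filter fun y => ∀ a ∈ F, y ∈ a ↔ x ∈ a

theorem mem_atom {F : Set (Set X)} {x y : X} : y ∈ atom F x ↔ ∀ a ∈ F, y ∈ a ↔ x ∈ a := by
  simp [atom]

theorem mem_atom_self (F : Set (Set X)) (x : X) : x ∈ atom F x :=
  mem_atom.2 fun _ _ => Iff.rfl

theorem atom_eq_of_mem {F : Set (Set X)} {x y : X} (h : y ∈ atom F x) : atom F y = atom F x := by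
  ext z
  simp only [mem_atom] at h ⊢
  exact forall₂_congr fun a ha => iff_congr Iff.rfl (h a ha)

theorem Induces.apply_mem_atom_iff {p : PartFun (Set X)} {σ : Equiv.Perm X} (hσ : Induces p σ)
    {x y : X} : σ y ∈ atom p.ran (σ x) ↔ y ∈ atom p.dom x := by
  simp only [mem_atom, PartFun.ran, Set.forall_mem_image]
  exact forall₂_congr fun a ha => by rw [hσ.apply_mem_iff ha, hσ.apply_mem_iff ha]

theorem Induces.card_atom {p : PartFun (Set X)} {σ : Equiv.Perm X} (hσ : Induces p σ) (x : X) :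
    (atom p.ran (σ x)).card = (atom p.dom x).card := by
  have himage : atom p.ran (σ x) = (atom p.dom x).map σ.toEmbedding := by
    ext z
    rw [Finset.mem_map_equiv, ← hσ.apply_mem_atom_iff, Equiv.apply_symm_apply]
  rw [himage, Finset.card_map]

theorem Induces.induces_iff {p : PartFun (Set X)} {σ τ : Equiv.Perm X} (hσ : Induces p σ) :
    Induces p τ ↔ ∀ x, τ x ∈ atom p.ran (σ x) := by
  constructor
  · rintro hτ x
    simp only [mem_atom, PartFun.ran, Set.forall_mem_image]
    intro a ha
    rw [hσ.apply_mem_iff ha, hτ.apply_mem_iff ha]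
  · intro hτ a ha
    have hsub : τ '' a ⊆ p.toFun a := by
      rintro _ ⟨x, hx, rfl⟩
      exact (mem_atom.1 (hτ x) _ ⟨a, ha, rfl⟩).2 ((hσ.apply_mem_iff ha x).2 hx)
    have hcard : (p.toFun a).ncard ≤ (τ '' a).ncard := by
      rw [hσ a ha, Set.ncard_image_of_injective _ σ.injective,
        Set.ncard_image_of_injective _ τ.injective]
    exact (Set.eq_of_subset_of_ncard_le hsub hcard (Set.toFinite _)).symm

end Induces

section CanonicalPerm

variable {X : Type*} [Fintype X] [LinearOrder X]

noncomputable def canonicalFun (p : PartFun (Set X)) (σ : Equiv.Perm X) (x : X) : X :=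
  rankMatch (atom p.dom x) (atom p.ran (σ x)) x

variable {p : PartFun (Set X)} {σ : Equiv.Perm X}

theorem Induces.canonicalFun_mem_atom (hσ : Induces p σ) (x : X) :
    canonicalFun p σ x ∈ atom p.ran (σ x) :=
  rankMatch_mem (mem_atom_self _ x) (hσ.card_atom x).ge

theorem Induces.canonicalFun_injective (hσ : Induces p σ) :
    Function.Injective (canonicalFun p σ) := by
  intro x x' hxx'
  have hran : atom p.ran (σ x') = atom p.ran (σ x) := by
    rw [← atom_eq_of_mem (hσ.canonicalFun_mem_atom x'), ← hxx',
      atom_eq_of_mem (hσ.canonicalFun_mem_atom x)]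
  have hx' : x' ∈ atom p.dom x := hσ.apply_mem_atom_iff.1 (hran ▸ mem_atom_self _ _)
  refine rankMatch_injOn (hσ.card_atom x).ge (mem_atom_self _ x) hx' ?_
  rwa [canonicalFun, canonicalFun, atom_eq_of_mem hx', hran] at hxx'

theorem Induces.canonicalFun_eq {τ : Equiv.Perm X} (hσ : Induces p σ) (hτ : Induces p τ) :
    canonicalFun p τ = canonicalFun p σ := by
  funext x
  rw [canonicalFun, canonicalFun, atom_eq_of_mem (hσ.induces_iff.1 hτ x)]

noncomputable def Induces.canonicalPerm (hσ : Induces p σ) : Equiv.Perm X :=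
  Equiv.ofBijective (canonicalFun p σ) (Finite.injective_iff_bijective.1 hσ.canonicalFun_injective)

theorem Induces.canonicalPerm_apply (hσ : Induces p σ) (x : X) :
    hσ.canonicalPerm x = canonicalFun p σ x :=
  rfl

theorem Induces.induces_canonicalPerm (hσ : Induces p σ) : Induces p hσ.canonicalPerm :=
  hσ.induces_iff.2 hσ.canonicalFun_mem_atom

theorem Induces.canonicalPerm_eq_mul {p₁ p₂ q : PartFun (Set X)} {σ₁ σ₂ τ : Equiv.Perm X}
    (h₁ : Induces p₁ σ₁) (h₂ : Induces p₂ σ₂) (hq : Induces q τ)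
    (hc : PartFun.CoherentTriple p₁ p₂ q) :
    hq.canonicalPerm = h₁.canonicalPerm * h₂.canonicalPerm := by
  ext x
  rw [Equiv.Perm.mul_apply, canonicalPerm_apply, canonicalPerm_apply, canonicalPerm_apply,
    (h₁.mul h₂ hc).canonicalFun_eq hq]
  obtain ⟨hdom, hran, hmid, -⟩ := hc
  set y := canonicalFun p₂ σ₂ x
  have hy : y ∈ atom p₁.dom (σ₂ x) := hmid ▸ h₂.canonicalFun_mem_atom x
  have hC : (atom p₂.ran (σ₂ x)).card = (atom p₂.dom x).card := h₂.card_atom x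
  have hE : (atom p₁.ran (σ₁ (σ₂ x))).card = (atom p₂.dom x).card := by
    rw [h₁.card_atom, ← hmid, hC]
  rw [canonicalFun, canonicalFun, atom_eq_of_mem hy, atom_eq_of_mem (h₁.apply_mem_atom_iff.2 hy),
    ← hdom, ← hran, ← hmid]
  exact (rankMatch_rankMatch (mem_atom_self _ x) hC.ge hE.ge).symm

end CanonicalPerm

/-- Lemma 2.1 (Lemma `L:simple`): if each `p ∈ P`, a partial function from `𝒫(X)` to
`𝒫(X)` with `X` finite, is induced by some permutation `σ_p` of `X` (i.e.
`p(a) = σ_p[a]` for `a ∈ dom(p)`), then there is a coherent map `φ : P → Sym(X)`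
with `p(a) = φ(p)[a]` for all `a ∈ dom(p)`. -/
theorem exists_coherent_extension_of_induced
    (X : Type*) [Fintype X] (P : Set (PartFun (Set X)))
    (h : ∀ p ∈ P, ∃ σ : Equiv.Perm X, ∀ a ∈ p.dom, p.toFun a = ⇑σ '' a) :
    ∃ φ : PartFun (Set X) → Equiv.Perm X,
      (∀ p ∈ P, ∀ a ∈ p.dom, p.toFun a = ⇑(φ p) '' a) ∧
      (∀ p₁ p₂ q, p₁ ∈ P → p₂ ∈ P → q ∈ P → PartFun.CoherentTriple p₁ p₂ q →
        φ q = φ p₁ * φ p₂) := by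
  classical
  let _ : LinearOrder X := LinearOrder.lift' (Fintype.equivFin X) (Fintype.equivFin X).injective
  choose σ hσ using h
  have hσ : ∀ p (hp : p ∈ P), Induces p (σ p hp) := hσ
  let φ p := if hp : p ∈ P then (hσ p hp).canonicalPerm else 1
  have hφ : ∀ p (hp : p ∈ P), φ p = (hσ p hp).canonicalPerm := fun p hp => dif_pos hp
  refine ⟨φ, fun p hp => ?_, fun p₁ p₂ q h₁ h₂ hq hc => ?_⟩
  · rw [hφ p hp]
    exact (hσ p hp).induces_canonicalPerm
  · rw [hφ q hq, hφ p₁ h₁, hφ p₂ h₂]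
    exact Induces.canonicalPerm_eq_mul _ _ _ hc
end

section
/- In the setting of the Mackey construction (B = (A × G)/∼ as above), the map ι: A → B defined by ι(x) = [x, 1], where 1 is the identity of G = Aut(B'), is injective. -/
open FirstOrder

variable {L : FirstOrder.Language} {β : Type*}

/-- A letter of a word: a partial automorphism `p` together with an exponent
(`true` for `p`, `false` for `p⁻¹`). -/
abbrev MackeyLetter (β : Type*) := PartialEquiv β β × Bool

/-- The partial bijection corresponding to a letter. -/
def letterPE (l : MackeyLetter β) : PartialEquiv β β := if l.2 then l.1 else l.1.symm

/-- The partial bijection `w = p₁^{e₁} ∘ ⋯ ∘ pₙ^{eₙ}` corresponding to a word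
(the rightmost letter is applied first); the empty word acts as the identity. -/
def wordPE (w : List (MackeyLetter β)) : PartialEquiv β β :=
  w.foldl (fun acc l => (letterPE l).trans acc) (PartialEquiv.refl β)

/-- A permutation of `β` is an automorphism of the `L`-structure `β`. -/
def IsAut (L : FirstOrder.Language) [L.Structure β] (g : Equiv.Perm β) : Prop :=
  ∀ (n : ℕ) (R : L.Relations n) (t : Fin n → β),
    Language.Structure.RelMap R t ↔ Language.Structure.RelMap R (fun i => g (t i))

/-- The permutation `ψ(p)^{e}` corresponding to a letter. -/
def letterPerm (ψ : PartialEquiv β β → Equiv.Perm β) (l : MackeyLetter β) : Equiv.Perm β :=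
  if l.2 then ψ l.1 else (ψ l.1)⁻¹

/-- The permutation `ψ(w) = ψ(p₁)^{e₁} ∘ ⋯ ∘ ψ(pₙ)^{eₙ}` of a word. -/
def wordPerm (ψ : PartialEquiv β β → Equiv.Perm β) (w : List (MackeyLetter β)) :
    Equiv.Perm β :=
  w.foldl (fun acc l => acc * letterPerm ψ l) 1

/-- The Mackey relation on `A × G`: `(x,g) ∼ (y,h)` iff there is a word `w` in the
alphabet `P ∪ P⁻¹` with `x ∈ dom(w)`, `w(x) = y` and `ψ(w) ∘ g = h`. -/
def mackeyRel (P : Set (PartialEquiv β β)) (A : Set β)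
    (ψ : PartialEquiv β β → Equiv.Perm β) :
    (A × Equiv.Perm β) → (A × Equiv.Perm β) → Prop :=
  fun xg yh => ∃ w : List (MackeyLetter β), (∀ l ∈ w, l.1 ∈ P) ∧
    (↑xg.1 ∈ (wordPE w).source) ∧ wordPE w ↑xg.1 = ↑yh.1 ∧
    wordPerm ψ w * xg.2 = yh.2


lemma letter_agree (P : Set (PartialEquiv β β)) (ψ : PartialEquiv β β → Equiv.Perm β)
    (hext : ∀ p ∈ P, ∀ x ∈ p.source, ψ p x = p x)
    (l : MackeyLetter β) (hl : l.1 ∈ P) {x : β} (hx : x ∈ (letterPE l).source) :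
    letterPerm ψ l x = letterPE l x := by
  rcases l with ⟨p, b⟩
  cases b with
  | true => simpa [letterPE, letterPerm] using hext p hl x (by simpa [letterPE] using hx)
  | false =>
    simp only [letterPE, letterPerm, if_neg Bool.false_ne_true] at hx ⊢
    have hx' : p.symm x ∈ p.source := p.symm_mapsTo (by simpa using hx)
    have := hext p hl (p.symm x) hx'
    rw [p.right_inv (by simpa using hx)] at this
    calc (ψ p)⁻¹ x = (ψ p)⁻¹ (ψ p (p.symm x)) := by rw [this]
    _ = p.symm x := (ψ p).symm_apply_apply _

lemma word_agree (P : Set (PartialEquiv β β)) (ψ : PartialEquiv β β → Equiv.Perm β)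
    (hext : ∀ p ∈ P, ∀ x ∈ p.source, ψ p x = p x)
    (w : List (MackeyLetter β)) (hw : ∀ l ∈ w, l.1 ∈ P) :
    ∀ x ∈ (wordPE w).source, wordPerm ψ w x = wordPE w x := by
  induction w using List.reverseRecOn with
  | nil => intro x _; simp [wordPE, wordPerm]
  | append_singleton w l ih =>
    intro x hx
    have hpe : wordPE (w ++ [l]) = (letterPE l).trans (wordPE w) := by
      simp [wordPE, List.foldl_append]
    have hpm : wordPerm ψ (w ++ [l]) = wordPerm ψ w * letterPerm ψ l := by
      simp [wordPerm, List.foldl_append]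
    rw [hpe, PartialEquiv.trans_source] at hx
    have hl : l.1 ∈ P := hw l (by simp)
    have h1 : letterPerm ψ l x = letterPE l x :=
      letter_agree P ψ hext l hl hx.1
    rw [hpe, hpm]
    simp only [Equiv.Perm.mul_apply, PartialEquiv.coe_trans, Function.comp_apply, h1]
    exact ih (fun l' hl' => hw l' (by simp [hl'])) _ hx.2

/-- In the Mackey construction `B = (A × G)/∼`, the map `ι : A → B`,
`ι(x) = [x, 1]`, is injective. -/
theorem mackey_iota_injective [L.Structure β] [Finite β]
    (A : Set β) (P : Set (PartialEquiv β β))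
    (ψ : PartialEquiv β β → Equiv.Perm β)
    (hsrc : ∀ p ∈ P, p.source ⊆ A) (htgt : ∀ p ∈ P, p.target ⊆ A)
    (haut : ∀ p ∈ P, IsAut L (ψ p))
    (hext : ∀ p ∈ P, ∀ x ∈ p.source, ψ p x = p x)
    (hequiv : Equivalence (mackeyRel P A ψ)) :
    Function.Injective
      (fun x : A => Quotient.mk ⟨mackeyRel P A ψ, hequiv⟩ (x, (1 : Equiv.Perm β))) := by
  intro x y h
  have hrel : mackeyRel P A ψ (x, (1 : Equiv.Perm β)) (y, (1 : Equiv.Perm β)) :=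
    Quotient.exact h
  obtain ⟨w, hw, hxsrc, hxy, hperm⟩ := hrel
  have h1 : wordPerm ψ w = 1 := by simpa using hperm
  have := word_agree P ψ hext w hw x hxsrc
  rw [h1] at this
  simp only at this hxy
  exact Subtype.ext (by rw [← hxy, ← this]; rfl)
end

section
/- In the Mackey construction B = (A × G)/∼, for each p ∈ P the map φ(p) defined by φ(p)([x,g]) = [x, g ∘ ψ(p)⁻¹] is well defined (independent of the representative of the equivalence class), and φ(p)([x,1]) = [p(x),1] for all x ∈ dom(p); i.e., φ(p) extends p under the embedding x ↦ [x,1]. -/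
open FirstOrder

variable {L : FirstOrder.Language} {β : Type*}

/-- In the Mackey construction, for each `p ∈ P` the map
`φ(p)([x,g]) = [x, g ∘ ψ(p)⁻¹]` is well defined on `∼`-classes, and
`φ(p)([x,1]) = [p(x),1]` for all `x ∈ dom(p)`, i.e. `φ(p)` extends `p` under the
embedding `x ↦ [x,1]`. -/
theorem mackey_phi_well_defined_and_extends [L.Structure β] [Finite β]
    (A : Set β) (P : Set (PartialEquiv β β))
    (ψ : PartialEquiv β β → Equiv.Perm β)
    (hsrc : ∀ p ∈ P, p.source ⊆ A) (htgt : ∀ p ∈ P, p.target ⊆ A)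
    (haut : ∀ p ∈ P, IsAut L (ψ p))
    (hext : ∀ p ∈ P, ∀ x ∈ p.source, ψ p x = p x) :
    ∀ p, (hp : p ∈ P) →
      ((∀ (x y : A) (g h : Equiv.Perm β), mackeyRel P A ψ (x, g) (y, h) →
        mackeyRel P A ψ (x, g * (ψ p)⁻¹) (y, h * (ψ p)⁻¹)) ∧
      (∀ (x : A) (hx : ↑x ∈ p.source),
        mackeyRel P A ψ (x, (ψ p)⁻¹)
          (⟨p ↑x, htgt p hp (p.map_source hx)⟩, (1 : Equiv.Perm β)))) := by
  intro p hp
  constructor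
  · rintro x y g h ⟨w, hw, hsrc', hmap, hperm⟩
    exact ⟨w, hw, hsrc', hmap, by rw [← mul_assoc, hperm]⟩
  · intro x hx
    refine ⟨[(p, true)], ?_, ?_, ?_, ?_⟩
    · simpa using hp
    · simpa [wordPE, letterPE] using hx
    · simp [wordPE, letterPE]
    · simp [wordPerm, letterPerm]
end

section
/- Let 𝓛 be a relational language and 𝒞 a class of finite 𝓛-structures. Then 𝒞 is a free amalgamation class (a Fraïssé class closed under free amalgams) if and only if 𝒞 = Forb_e(ℱ) for some family ℱ of finite structures each of which is a Gaifman clique (i.e., any two distinct points of F are contained together in some tuple satisfying a relation). -/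
/-!
A Gaifman clique embedded in a free amalgam lies entirely on one side: any two of its points
share a relation, and the free amalgam has no relations across the two sides. Hence `Forb_e` of
a family of cliques is closed under free amalgams, and amalgamating freely over the empty
structure gives joint embedding.

Conversely, a finite structure `M` that is not a Gaifman clique has two points `u ≠ v` that no
relation joins, so `M` is the free amalgam of `M ∖ {v}` and `M ∖ {u}` over `M ∖ {u, v}`. By
induction on the size of `M`, a free amalgamation class `K` therefore contains every finite
structure whose Gaifman-clique substructures all lie in `K`, i.e. `K` is `Forb_e` of the
cliques outside `K`.
-/

open FirstOrder CategoryTheory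

universe u v w

variable (L : FirstOrder.Language.{u, v})

/-- The identifications defining the free amalgam of `B₁` and `B₂` over `A`. -/
def amalgRel {A B₁ B₂ : Bundled.{w} L.Structure} (f₁ : A ↪[L] B₁) (f₂ : A ↪[L] B₂) :
    (B₁ ⊕ B₂) → (B₁ ⊕ B₂) → Prop :=
  fun x y => ∃ a : A, x = Sum.inl (f₁ a) ∧ y = Sum.inr (f₂ a)

/-- The structure on the free amalgam: its relations are exactly those of `B₁`
together with those of `B₂` (no new relations across `B₁∖A` and `B₂∖A`). -/
def freeAmalgamStructure (hrel : ∀ n, IsEmpty (L.Functions n))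
    {A B₁ B₂ : Bundled.{w} L.Structure} (f₁ : A ↪[L] B₁) (f₂ : A ↪[L] B₂) :
    L.Structure (Quot (amalgRel L f₁ f₂)) where
  funMap := fun {n} f _ => ((hrel n).elim f)
  RelMap := fun {n} R v =>
    (∃ w : Fin n → B₁, (∀ i, Quot.mk _ (Sum.inl (w i)) = v i) ∧
      Language.Structure.RelMap R w) ∨
    (∃ w : Fin n → B₂, (∀ i, Quot.mk _ (Sum.inr (w i)) = v i) ∧
      Language.Structure.RelMap R w)

/-- The free amalgam of `B₁` and `B₂` over `A` (along `f₁`, `f₂`), as a bundled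
structure. -/
def FreeAmalgam (hrel : ∀ n, IsEmpty (L.Functions n))
    {A B₁ B₂ : Bundled.{w} L.Structure} (f₁ : A ↪[L] B₁) (f₂ : A ↪[L] B₂) :
    Bundled.{w} L.Structure :=
  ⟨Quot (amalgRel L f₁ f₂), freeAmalgamStructure L hrel f₁ f₂⟩

/-- `F` is a Gaifman clique: any two distinct points of `F` are contained together
in some tuple satisfying a relation. -/
def IsGaifmanClique (F : Bundled.{w} L.Structure) : Prop :=
  ∀ u v : F, u ≠ v → ∃ (n : ℕ) (R : L.Relations n) (t : Fin n → F),
    Language.Structure.RelMap R t ∧ (∃ i, t i = u) ∧ ∃ j, t j = v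

/-- `Forb_e(ℱ)`: the class of finite structures into which no member of `ℱ` embeds. -/
def ForbE (ℱ : Set (Bundled.{w} L.Structure)) : Set (Bundled.{w} L.Structure) :=
  {A | Finite A ∧ ∀ F ∈ ℱ, IsEmpty (F ↪[L] A)}

/-- A free amalgamation class: a class of finite structures, hereditary (hence
isomorphism-closed), with the joint embedding and amalgamation properties, and
closed under free amalgams. -/
def IsFreeAmalgamationClass (hrel : ∀ n, IsEmpty (L.Functions n))
    (K : Set (Bundled.{w} L.Structure)) : Prop :=
  (∀ M ∈ K, Finite M) ∧
  (∀ M ∈ K, ∀ N : Bundled.{w} L.Structure, Nonempty (N ↪[L] M) → N ∈ K) ∧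
  (∀ B₁ ∈ K, ∀ B₂ ∈ K, ∃ C ∈ K, Nonempty (B₁ ↪[L] C) ∧ Nonempty (B₂ ↪[L] C)) ∧
  (∀ A B₁ B₂ : Bundled.{w} L.Structure, A ∈ K → B₁ ∈ K → B₂ ∈ K →
    ∀ (f₁ : A ↪[L] B₁) (f₂ : A ↪[L] B₂), ∃ C ∈ K, ∃ (g₁ : B₁ ↪[L] C) (g₂ : B₂ ↪[L] C),
      g₁.comp f₁ = g₂.comp f₂) ∧
  (∀ A B₁ B₂ : Bundled.{w} L.Structure, A ∈ K → B₁ ∈ K → B₂ ∈ K →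
    ∀ (f₁ : A ↪[L] B₁) (f₂ : A ↪[L] B₂), FreeAmalgam L hrel f₁ f₂ ∈ K)

open FirstOrder.Language Structure

namespace FreeAmalgam

variable {L} (hrel : ∀ n, IsEmpty (L.Functions n))
variable {A B₁ B₂ : Bundled.{w} L.Structure} (f₁ : A ↪[L] B₁) (f₂ : A ↪[L] B₂)

/-- A normal form for the identifications of the free amalgam. -/
noncomputable def normalize : B₁ ⊕ B₂ → B₁ ⊕ B₂ :=
  Sum.elim Sum.inl (Function.extend f₂ (Sum.inl ∘ f₁) Sum.inr)

@[simp]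
theorem normalize_inl (b : B₁) : normalize f₁ f₂ (.inl b) = .inl b := rfl

@[simp]
theorem normalize_inr_apply (a : A) : normalize f₁ f₂ (.inr (f₂ a)) = .inl (f₁ a) :=
  f₂.injective.extend_apply _ _ a

theorem normalize_inr_of_notMem_range {c : B₂} (hc : c ∉ Set.range f₂) :
    normalize f₁ f₂ (.inr c) = .inr c :=
  Function.extend_apply' _ _ _ hc

theorem mk_eq_mk_iff {x y : B₁ ⊕ B₂} :
    Quot.mk (amalgRel L f₁ f₂) x = Quot.mk _ y ↔ normalize f₁ f₂ x = normalize f₁ f₂ y := by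
  have mk_normalize (x : B₁ ⊕ B₂) :
      Quot.mk (amalgRel L f₁ f₂) (normalize f₁ f₂ x) = Quot.mk _ x := by
    rcases x with b | c
    · rfl
    · by_cases hc : c ∈ Set.range f₂
      · obtain ⟨a, rfl⟩ := hc
        rw [normalize_inr_apply]
        exact Quot.sound ⟨a, rfl, rfl⟩
      · rw [normalize_inr_of_notMem_range f₁ f₂ hc]
  refine ⟨fun h => ?_, fun h => by rw [← mk_normalize, h, mk_normalize]⟩
  have normalize_eq : ∀ x y, amalgRel L f₁ f₂ x y → normalize f₁ f₂ x = normalize f₁ f₂ y := by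
    rintro _ _ ⟨a, rfl, rfl⟩
    rw [normalize_inl, normalize_inr_apply]
  exact congrArg (Quot.lift _ normalize_eq) h

theorem mk_inl_injective :
    Function.Injective fun b : B₁ => Quot.mk (amalgRel L f₁ f₂) (.inl b) := fun b b' h => by
  simpa [mk_eq_mk_iff] using h

theorem mk_inr_injective :
    Function.Injective fun c : B₂ => Quot.mk (amalgRel L f₁ f₂) (.inr c) := by
  intro c c' h
  simp only [mk_eq_mk_iff] at h
  by_cases hc : c ∈ Set.range f₂ <;> by_cases hc' : c' ∈ Set.range f₂
  · obtain ⟨a, rfl⟩ := hc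
    obtain ⟨a', rfl⟩ := hc'
    simpa using h
  · obtain ⟨a, rfl⟩ := hc
    simp [normalize_inr_of_notMem_range f₁ f₂ hc'] at h
  · obtain ⟨a', rfl⟩ := hc'
    simp [normalize_inr_of_notMem_range f₁ f₂ hc] at h
  · simpa [normalize_inr_of_notMem_range f₁ f₂ hc, normalize_inr_of_notMem_range f₁ f₂ hc'] using h

theorem mk_inl_eq_mk_inr_iff {b : B₁} {c : B₂} :
    Quot.mk (amalgRel L f₁ f₂) (.inl b) = Quot.mk _ (.inr c) ↔ ∃ a, f₁ a = b ∧ f₂ a = c := by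
  rw [mk_eq_mk_iff]
  by_cases hc : c ∈ Set.range f₂
  · obtain ⟨a, rfl⟩ := hc
    simp [eq_comm]
  · simp only [normalize_inl, normalize_inr_of_notMem_range f₁ f₂ hc, reduceCtorEq, false_iff]
    rintro ⟨a, -, rfl⟩
    exact hc ⟨a, rfl⟩

theorem relMap_iff_of_mk_inl_eq_mk_inr {n : ℕ} (R : L.Relations n) {x : Fin n → B₁}
    {y : Fin n → B₂} (h : ∀ i, Quot.mk (amalgRel L f₁ f₂) (.inl (x i)) = Quot.mk _ (.inr (y i))) :
    RelMap R x ↔ RelMap R y := by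
  choose a hax hay using fun i => (mk_inl_eq_mk_inr_iff f₁ f₂).1 (h i)
  rw [← funext hax, ← funext hay]
  exact (f₁.map_rel R a).trans (f₂.map_rel R a).symm

def inl : B₁ ↪[L] FreeAmalgam L hrel f₁ f₂ where
  toFun b := Quot.mk _ (.inl b)
  inj' := mk_inl_injective f₁ f₂
  map_fun' f := (hrel _).elim f
  map_rel' R x := by
    refine ⟨?_, fun h => .inl ⟨x, fun _ => rfl, h⟩⟩
    rintro (⟨y, hy, h⟩ | ⟨y, hy, h⟩)
    · rwa [← funext fun i => mk_inl_injective f₁ f₂ (hy i)]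
    · exact (relMap_iff_of_mk_inl_eq_mk_inr f₁ f₂ R fun i => (hy i).symm).2 h

def inr : B₂ ↪[L] FreeAmalgam L hrel f₁ f₂ where
  toFun c := Quot.mk _ (.inr c)
  inj' := mk_inr_injective f₁ f₂
  map_fun' f := (hrel _).elim f
  map_rel' R x := by
    refine ⟨?_, fun h => .inr ⟨x, fun _ => rfl, h⟩⟩
    rintro (⟨y, hy, h⟩ | ⟨y, hy, h⟩)
    · exact (relMap_iff_of_mk_inl_eq_mk_inr f₁ f₂ R hy).1 h
    · rwa [← funext fun i => mk_inr_injective f₁ f₂ (hy i)]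

theorem inl_apply_eq_inr_apply (a : A) : inl hrel f₁ f₂ (f₁ a) = inr hrel f₁ f₂ (f₂ a) :=
  Quot.sound ⟨a, rfl, rfl⟩

theorem inl_comp_eq_inr_comp : (inl hrel f₁ f₂).comp f₁ = (inr hrel f₁ f₂).comp f₂ :=
  Embedding.ext (inl_apply_eq_inr_apply hrel f₁ f₂)

theorem exists_inl_eq_or_exists_inr_eq (q : FreeAmalgam L hrel f₁ f₂) :
    (∃ b, inl hrel f₁ f₂ b = q) ∨ ∃ c, inr hrel f₁ f₂ c = q := by
  induction q using Quot.ind with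
  | mk x => rcases x with b | c
            exacts [.inl ⟨b, rfl⟩, .inr ⟨c, rfl⟩]

theorem relMap_iff {n : ℕ} (R : L.Relations n) (q : Fin n → FreeAmalgam L hrel f₁ f₂) :
    RelMap R q ↔ (∃ x, inl hrel f₁ f₂ ∘ x = q ∧ RelMap R x) ∨
      ∃ y, inr hrel f₁ f₂ ∘ y = q ∧ RelMap R y := by
  simp only [funext_iff]
  rfl

theorem finite [Finite B₁] [Finite B₂] : Finite (FreeAmalgam L hrel f₁ f₂) :=
  Quot.finite _

end FreeAmalgam

theorem FirstOrder.Language.Embedding.nonempty_of_forall_mem_range {L : FirstOrder.Language}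
    {M N P : Type*} [L.Structure M] [L.Structure N] [L.Structure P] (e : M ↪[L] P)
    (g : N ↪[L] P) (h : ∀ x, e x ∈ Set.range g) : Nonempty (M ↪[L] N) :=
  ⟨g.equivRange.symm.toEmbedding.comp (e.codRestrict g.toHom.range h)⟩

def FirstOrder.Language.Embedding.ofIsEmpty {L : FirstOrder.Language}
    (hrel0 : IsEmpty (L.Relations 0)) {M N : Type*} [L.Structure M] [L.Structure N] [IsEmpty M] :
    M ↪[L] N where
  toFun := isEmptyElim
  inj' x := isEmptyElim x
  map_fun' f x := isEmptyElim (funMap f x)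
  map_rel' {n} R x := by
    cases n with
    | zero => exact hrel0.elim R
    | succ n => exact isEmptyElim (x 0)

section ForbE

variable {L} (hrel : ∀ n, IsEmpty (L.Functions n))
variable {A B₁ B₂ : Bundled.{w} L.Structure} (f₁ : A ↪[L] B₁) (f₂ : A ↪[L] B₂)

theorem IsGaifmanClique.nonempty_embedding_of_embedding_freeAmalgam {F : Bundled.{w} L.Structure}
    (hF : IsGaifmanClique L F) (e : F ↪[L] FreeAmalgam L hrel f₁ f₂) :
    Nonempty (F ↪[L] B₁) ∨ Nonempty (F ↪[L] B₂) := by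
  by_cases h₁ : ∀ x, e x ∈ Set.range (FreeAmalgam.inl hrel f₁ f₂)
  · exact .inl (e.nonempty_of_forall_mem_range _ h₁)
  by_cases h₂ : ∀ x, e x ∈ Set.range (FreeAmalgam.inr hrel f₁ f₂)
  · exact .inr (e.nonempty_of_forall_mem_range _ h₂)
  push Not at h₁ h₂
  obtain ⟨u, hu⟩ := h₁
  obtain ⟨v, hv⟩ := h₂
  have huv : u ≠ v := by
    rintro rfl
    rcases FreeAmalgam.exists_inl_eq_or_exists_inr_eq hrel f₁ f₂ (e u) with h | h
    exacts [hu h, hv h]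
  -- a relation through `u` and `v` lives in `B₁` or in `B₂`, yet `e u ∉ B₁` and `e v ∉ B₂`
  obtain ⟨n, R, t, hR, ⟨i, rfl⟩, ⟨j, rfl⟩⟩ := hF u v huv
  rcases (FreeAmalgam.relMap_iff hrel f₁ f₂ R _).1 ((e.map_rel R t).2 hR) with
    ⟨x, hx, -⟩ | ⟨y, hy, -⟩
  exacts [(hu ⟨x i, congrFun hx i⟩).elim, (hv ⟨y j, congrFun hy j⟩).elim]

theorem forbE_of_embedding {ℱ : Set (Bundled.{w} L.Structure)} {M N : Bundled.{w} L.Structure}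
    (hM : M ∈ ForbE L ℱ) (e : N ↪[L] M) : N ∈ ForbE L ℱ :=
  have := hM.1
  ⟨Finite.of_injective e e.injective, fun F hF => ⟨fun g => (hM.2 F hF).false (e.comp g)⟩⟩

theorem freeAmalgam_mem_forbE {ℱ : Set (Bundled.{w} L.Structure)}
    (hℱ : ∀ F ∈ ℱ, IsGaifmanClique L F) (h₁ : B₁ ∈ ForbE L ℱ) (h₂ : B₂ ∈ ForbE L ℱ) :
    FreeAmalgam L hrel f₁ f₂ ∈ ForbE L ℱ := by
  have := h₁.1
  have := h₂.1
  refine ⟨FreeAmalgam.finite hrel f₁ f₂, fun F hF => ⟨fun e => ?_⟩⟩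
  rcases (hℱ F hF).nonempty_embedding_of_embedding_freeAmalgam hrel f₁ f₂ e with g | g
  exacts [not_nonempty_iff.2 (h₁.2 F hF) g, not_nonempty_iff.2 (h₂.2 F hF) g]

theorem isFreeAmalgamationClass_forbE (hrel0 : IsEmpty (L.Relations 0))
    {ℱ : Set (Bundled.{w} L.Structure)} (hℱ : ∀ F ∈ ℱ, IsGaifmanClique L F) :
    IsFreeAmalgamationClass L hrel (ForbE L ℱ) := by
  refine ⟨fun M hM => hM.1, fun M hM N ⟨e⟩ => forbE_of_embedding hM e, ?_,
    fun A B₁ B₂ _ h₁ h₂ f₁ f₂ => ⟨_, freeAmalgam_mem_forbE hrel f₁ f₂ hℱ h₁ h₂,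
      FreeAmalgam.inl hrel f₁ f₂, FreeAmalgam.inr hrel f₁ f₂,
      FreeAmalgam.inl_comp_eq_inr_comp hrel f₁ f₂⟩,
    fun A B₁ B₂ _ h₁ h₂ f₁ f₂ => freeAmalgam_mem_forbE hrel f₁ f₂ hℱ h₁ h₂⟩
  -- joint embedding: amalgamate freely over the empty substructure
  intro B₁ h₁ B₂ h₂
  have : IsEmpty L.Constants := hrel 0
  let A : Bundled.{w} L.Structure := ⟨(⊥ : L.Substructure B₁), inferInstance⟩
  let f₁ : A ↪[L] B₁ := Substructure.subtype ⊥
  let f₂ : A ↪[L] B₂ := Embedding.ofIsEmpty hrel0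
  exact ⟨_, freeAmalgam_mem_forbE hrel f₁ f₂ hℱ h₁ h₂,
    ⟨FreeAmalgam.inl hrel f₁ f₂⟩, ⟨FreeAmalgam.inr hrel f₁ f₂⟩⟩

end ForbE

namespace FirstOrder.Language.Substructure

variable {L} (hrel : ∀ n, IsEmpty (L.Functions n))
variable {M : Bundled.{w} L.Structure} (S₁ S₂ : L.Substructure M)

abbrev freeAmalgamInf : Bundled.{w} L.Structure :=
  FreeAmalgam L hrel (A := ⟨↥(S₁ ⊓ S₂), inferInstance⟩) (B₁ := ⟨S₁, inferInstance⟩)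
    (B₂ := ⟨S₂, inferInstance⟩) (inclusion inf_le_left) (inclusion inf_le_right)

def freeAmalgamInfToSelf : freeAmalgamInf hrel S₁ S₂ → M :=
  Quot.lift (Sum.elim Subtype.val Subtype.val) (by rintro _ _ ⟨a, rfl, rfl⟩; rfl)

theorem freeAmalgamInfToSelf_injective : Function.Injective (freeAmalgamInfToSelf hrel S₁ S₂) := by
  have inl_eq_inr {x : S₁} {y : S₂} (h : (x : M) = y) :
      (Quot.mk _ (.inl x) : freeAmalgamInf hrel S₁ S₂) = Quot.mk _ (.inr y) :=
    Quot.sound ⟨⟨x, x.2, h ▸ y.2⟩, rfl, congrArg _ (Subtype.ext h.symm)⟩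
  intro p q h
  rcases FreeAmalgam.exists_inl_eq_or_exists_inr_eq hrel _ _ p with ⟨x, rfl⟩ | ⟨y, rfl⟩ <;>
  rcases FreeAmalgam.exists_inl_eq_or_exists_inr_eq hrel _ _ q with ⟨x', rfl⟩ | ⟨y', rfl⟩
  · rw [Subtype.ext h]
  · exact inl_eq_inr h
  · exact (inl_eq_inr h.symm).symm
  · rw [Subtype.ext h]

theorem freeAmalgamInfToSelf_surjective (hcover : ∀ x, x ∈ S₁ ∨ x ∈ S₂) :
    Function.Surjective (freeAmalgamInfToSelf hrel S₁ S₂) := fun x => by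
  rcases hcover x with h | h
  exacts [⟨Quot.mk _ (.inl (⟨x, h⟩ : S₁)), rfl⟩, ⟨Quot.mk _ (.inr (⟨x, h⟩ : S₂)), rfl⟩]

theorem relMap_freeAmalgamInfToSelf_iff
    (hsplit : ∀ {n} (R : L.Relations n) (x : Fin n → M), RelMap R x →
      (∀ i, x i ∈ S₁) ∨ ∀ i, x i ∈ S₂)
    {n : ℕ} (R : L.Relations n) (q : Fin n → freeAmalgamInf hrel S₁ S₂) :
    RelMap R (freeAmalgamInfToSelf hrel S₁ S₂ ∘ q) ↔ RelMap R q := by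
  set φ := freeAmalgamInfToSelf hrel S₁ S₂
  rw [FreeAmalgam.relMap_iff]
  constructor
  · intro hR
    rcases hsplit R _ hR with h | h
    · refine .inl ⟨fun i => ⟨φ (q i), h i⟩, ?_, (S₁.subtype.map_rel R _).1 hR⟩
      exact funext fun i => freeAmalgamInfToSelf_injective hrel S₁ S₂ rfl
    · refine .inr ⟨fun i => ⟨φ (q i), h i⟩, ?_, (S₂.subtype.map_rel R _).1 hR⟩
      exact funext fun i => freeAmalgamInfToSelf_injective hrel S₁ S₂ rfl
  · rintro (⟨x, rfl, hR⟩ | ⟨y, rfl, hR⟩)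
    exacts [(S₁.subtype.map_rel R x).2 hR, (S₂.subtype.map_rel R y).2 hR]

theorem nonempty_embedding_freeAmalgamInf (hcover : ∀ x, x ∈ S₁ ∨ x ∈ S₂)
    (hsplit : ∀ {n} (R : L.Relations n) (x : Fin n → M), RelMap R x →
      (∀ i, x i ∈ S₁) ∨ ∀ i, x i ∈ S₂) :
    Nonempty (M ↪[L] freeAmalgamInf hrel S₁ S₂) :=
  ⟨Language.Equiv.toEmbedding (Language.Equiv.symm
    { toEquiv := .ofBijective _ ⟨freeAmalgamInfToSelf_injective hrel S₁ S₂,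
        freeAmalgamInfToSelf_surjective hrel S₁ S₂ hcover⟩
      map_fun' := fun f => (hrel _).elim f
      map_rel' := relMap_freeAmalgamInfToSelf_iff hrel S₁ S₂ hsplit })⟩

end FirstOrder.Language.Substructure

section Classification

variable {L} (hrel : ∀ n, IsEmpty (L.Functions n))

theorem exists_embedding_freeAmalgamInf_of_not_isGaifmanClique {M : Bundled.{w} L.Structure}
    (hM : ¬IsGaifmanClique L M) :
    ∃ S₁ S₂ : L.Substructure M, (∃ x, x ∉ S₁) ∧ (∃ x, x ∉ S₂) ∧
      Nonempty (M ↪[L] Substructure.freeAmalgamInf hrel S₁ S₂) := by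
  have : L.IsRelational := hrel
  simp only [IsGaifmanClique, not_forall, exists_prop] at hM
  obtain ⟨u, v, huv, hno⟩ := hM
  refine ⟨Substructure.closure L {v}ᶜ, Substructure.closure L {u}ᶜ, ⟨v, ?_⟩, ⟨u, ?_⟩,
    Substructure.nonempty_embedding_freeAmalgamInf hrel _ _ (fun x => ?_) fun R t hR => ?_⟩
  all_goals simp only [Substructure.mem_closure_iff_of_isRelational, Set.mem_compl_singleton_iff,
    ne_eq, not_not]
  · by_contra! h
    exact huv (h.2.symm.trans h.1)
  · by_contra! h
    obtain ⟨⟨i, hi⟩, ⟨j, hj⟩⟩ := h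
    exact hno ⟨_, R, t, hR, ⟨j, hj⟩, ⟨i, hi⟩⟩

theorem IsFreeAmalgamationClass.mem_of_forall_isGaifmanClique {K : Set (Bundled.{w} L.Structure)}
    (hK : IsFreeAmalgamationClass L hrel K) {M : Bundled.{w} L.Structure} [Finite M]
    (hM : ∀ F, IsGaifmanClique L F → Nonempty (F ↪[L] M) → F ∈ K) : M ∈ K := by
  induction h : Nat.card M using Nat.strong_induction_on generalizing M with
  | _ n ih =>
  obtain ⟨-, hereditary, -, -, free⟩ := hK
  by_cases hclique : IsGaifmanClique L M
  · exact hM M hclique ⟨Embedding.refl L M⟩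
  obtain ⟨S₁, S₂, ⟨x₁, hx₁⟩, ⟨x₂, hx₂⟩, ⟨e⟩⟩ :=
    exists_embedding_freeAmalgamInf_of_not_isGaifmanClique hrel hclique
  have proper_mem (S : L.Substructure M) {x : M} (hx : x ∉ S) :
      (⟨S, inferInstance⟩ : Bundled.{w} L.Structure) ∈ K :=
    ih _ (h ▸ Finite.card_subtype_lt hx) (fun F hF ⟨g⟩ => hM F hF ⟨S.subtype.comp g⟩) rfl
  exact hereditary _ (free _ _ _ (proper_mem (S₁ ⊓ S₂) fun h => hx₁ h.1) (proper_mem _ hx₁)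
    (proper_mem _ hx₂) _ _) M ⟨e⟩

end Classification

/-- A class of finite structures in a relational language is a free amalgamation
class iff it is `Forb_e(ℱ)` for some family `ℱ` of Gaifman cliques. -/
theorem freeAmalgamationClass_iff_forb_gaifman_cliques
    (hrel : ∀ n, IsEmpty (L.Functions n)) (hrel0 : IsEmpty (L.Relations 0))
    (K : Set (Bundled.{w} L.Structure)) :
    IsFreeAmalgamationClass L hrel K ↔
      ∃ ℱ : Set (Bundled.{w} L.Structure),
        (∀ F ∈ ℱ, IsGaifmanClique L F) ∧ K = ForbE L ℱ := by
  constructor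
  · intro hK
    refine ⟨{F | IsGaifmanClique L F ∧ F ∉ K}, fun F hF => hF.1, Set.Subset.antisymm ?_ ?_⟩
    · exact fun M hM => ⟨hK.1 M hM, fun F hF => ⟨fun e => hF.2 (hK.2.1 M hM F ⟨e⟩)⟩⟩
    · intro M hM
      have := hM.1
      exact hK.mem_of_forall_isGaifmanClique hrel fun F hF ⟨e⟩ =>
        by_contra fun hFK => (hM.2 F ⟨hF, hFK⟩).false e
  · rintro ⟨ℱ, hℱ, rfl⟩
    exact isFreeAmalgamationClass_forbE hrel hrel0 hℱ
end
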